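/- arXiv:2311.02766 — 2 statements merged into one kernel-verified Lean document; each statement's English description precedes it below -/
import Mathlib

section
/- Let D ≥ 1, let π_Ψ : ℝ^D → ℝ, let G_Ψ : ℝ^D → Matrix (Fin D) (Fin D) ℝ with G_Ψ(ψ) positive definite for every ψ, let φ : ℝ^D ≃ ℝ^D be a bijection, and let J : ℝ^D → Matrix (Fin D) (Fin D) ℝ with J(θ) invertible for every θ. Define π_Θ(θ) = π_Ψ(φ⁻¹(θ)) · |det J(θ)| and G_Θ(θ) = J(θ)ᵀ · G_Ψ(φ⁻¹(θ)) · J(θ). Then a point ψ̂ ∈ ℝ^D is a global maximizer of ψ ↦ π_Ψ(ψ)/√(det G_Ψ(ψ)) if and only if φ(ψ̂) is a global maximizer of θ ↦ π_Θ(θ)/√(det G_Θ(θ)). That is, the Hausdorff MAP is invariant under reparametrization. -/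
/-!
The Jacobian factor `|det J|` in the transformed density is cancelled exactly by the factor
`√(det J)² = |det J|` that the transformed metric contributes to `√(det G)`. Hence the
Hausdorff density in `θ` is the Hausdorff density in `ψ` composed with `φ⁻¹`, and a bijection
carries global maximizers of the one to global maximizers of the other.
-/

open Matrix

noncomputable def hausdorffDensity {X n : Type*} [Fintype n] [DecidableEq n]
    (π : X → ℝ) (G : X → Matrix n n ℝ) (x : X) : ℝ :=
  π x / √(G x).det

theorem Matrix.det_transpose_mul_mul_self {n R : Type*} [Fintype n] [DecidableEq n] [CommRing R]
    (A B : Matrix n n R) : (Aᵀ * B * A).det = A.det ^ 2 * B.det := by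
  rw [det_mul, det_mul, det_transpose]
  ring

theorem Real.mul_abs_div_sqrt_sq_mul {a d : ℝ} (hd : d ≠ 0) (g : ℝ) :
    a * |d| / √(d ^ 2 * g) = a / √g := by
  rw [Real.sqrt_mul (sq_nonneg d), Real.sqrt_sq_eq_abs, mul_comm |d|,
    mul_div_mul_right _ _ (abs_ne_zero.mpr hd)]

theorem hausdorffDensity_reparam {X Y n : Type*} [Fintype n] [DecidableEq n]
    (π : X → ℝ) (G : X → Matrix n n ℝ) (φ : X ≃ Y) (J : Y → Matrix n n ℝ)
    (hJ : ∀ y, IsUnit (J y)) (y : Y) :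
    hausdorffDensity (fun y ↦ π (φ.symm y) * |(J y).det|)
        (fun y ↦ (J y)ᵀ * G (φ.symm y) * J y) y =
      hausdorffDensity π G (φ.symm y) := by
  rw [hausdorffDensity, det_transpose_mul_mul_self]
  exact Real.mul_abs_div_sqrt_sq_mul ((isUnit_iff_isUnit_det _).mp (hJ y)).ne_zero _

theorem hausdorff_map_invariant_general
    (D : ℕ)
    (πΨ : (Fin D → ℝ) → ℝ)
    (GΨ : (Fin D → ℝ) → Matrix (Fin D) (Fin D) ℝ)
    (φ : (Fin D → ℝ) ≃ (Fin D → ℝ))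
    (J : (Fin D → ℝ) → Matrix (Fin D) (Fin D) ℝ)
    (hJ : ∀ θ : Fin D → ℝ, IsUnit (J θ))
    (πΘ : (Fin D → ℝ) → ℝ)
    (hπΘ : ∀ θ : Fin D → ℝ, πΘ θ = πΨ (φ.symm θ) * |(J θ).det|)
    (GΘ : (Fin D → ℝ) → Matrix (Fin D) (Fin D) ℝ)
    (hGΘ : ∀ θ : Fin D → ℝ, GΘ θ = (J θ)ᵀ * GΨ (φ.symm θ) * J θ)
    (ψhat : Fin D → ℝ) :
    (∀ ψ : Fin D → ℝ,
        πΨ ψ / Real.sqrt (GΨ ψ).det ≤ πΨ ψhat / Real.sqrt (GΨ ψhat).det) ↔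
      (∀ θ : Fin D → ℝ,
        πΘ θ / Real.sqrt (GΘ θ).det ≤ πΘ (φ ψhat) / Real.sqrt (GΘ (φ ψhat)).det) := by
  have hpull : ∀ θ, πΘ θ / √(GΘ θ).det = πΨ (φ.symm θ) / √(GΨ (φ.symm θ)).det := fun θ ↦ by
    rw [hπΘ, hGΘ]
    exact hausdorffDensity_reparam πΨ GΨ φ J hJ θ
  simp only [hpull, Equiv.symm_apply_apply]
  exact φ.forall_congr_left

/-- Invariance of the Hausdorff MAP under reparametrization: with transformed density
`π_Θ(θ) = π_Ψ(φ⁻¹(θ))·|det J(θ)|` and transformed metric `G_Θ(θ) = J(θ)ᵀ G_Ψ(φ⁻¹(θ)) J(θ)`,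
a point `ψ̂` globally maximizes `ψ ↦ π_Ψ(ψ)/√(det G_Ψ(ψ))` iff `φ(ψ̂)` globally maximizes
`θ ↦ π_Θ(θ)/√(det G_Θ(θ))`. -/
theorem hausdorff_map_invariant
    (D : ℕ) (hD : 1 ≤ D)
    (πΨ : (Fin D → ℝ) → ℝ)
    (GΨ : (Fin D → ℝ) → Matrix (Fin D) (Fin D) ℝ)
    (hGΨ : ∀ ψ : Fin D → ℝ, (GΨ ψ).PosDef)
    (φ : (Fin D → ℝ) ≃ (Fin D → ℝ))
    (J : (Fin D → ℝ) → Matrix (Fin D) (Fin D) ℝ)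
    (hJ : ∀ θ : Fin D → ℝ, IsUnit (J θ))
    (πΘ : (Fin D → ℝ) → ℝ)
    (hπΘ : ∀ θ : Fin D → ℝ, πΘ θ = πΨ (φ.symm θ) * |(J θ).det|)
    (GΘ : (Fin D → ℝ) → Matrix (Fin D) (Fin D) ℝ)
    (hGΘ : ∀ θ : Fin D → ℝ, GΘ θ = (J θ)ᵀ * GΨ (φ.symm θ) * J θ)
    (ψhat : Fin D → ℝ) :
    (∀ ψ : Fin D → ℝ,
        πΨ ψ / Real.sqrt (GΨ ψ).det ≤ πΨ ψhat / Real.sqrt (GΨ ψhat).det) ↔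
      (∀ θ : Fin D → ℝ,
        πΘ θ / Real.sqrt (GΘ θ).det ≤ πΘ (φ ψhat) / Real.sqrt (GΘ (φ ψhat)).det) :=
  hausdorff_map_invariant_general D πΨ GΨ φ J hJ πΘ hπΘ GΘ hGΘ ψhat
end

section
/- Let D ≥ 1 and let ℓ : ℝ^D → ℝ be twice continuously differentiable. Define the Monge metric G(θ) = I + ∇ℓ(θ)∇ℓ(θ)ᵀ, and let θ : ℝ → ℝ^D be a C² curve satisfying the geodesic equation for G (θ''_k(t) = -Σ_{i,j} Γ^k_{ij}(θ(t)) θ'_i(t) θ'_j(t) with Γ the Levi-Civita Christoffel symbols of G), with initial point satisfying ∇ℓ(θ(0)) = 0. Then for every t: ‖θ'(t)‖² + ⟨θ'(t), ∇ℓ(θ(t))⟩² = ‖θ'(0)‖², and hence ‖θ'(t)‖ ≤ ‖θ'(0)‖, with strict inequality whenever ⟨θ'(t), ∇ℓ(θ(t))⟩ ≠ 0. In particular, the Euclidean distance travelled by the Riemannian Laplace sampler with the Monge metric starting at the MAP is upper-bounded by the Euclidean sampler's distance ‖θ'(0)‖. -/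
open Matrix

set_option maxHeartbeats 1000000

private lemma monge_inv_aux {D : ℕ} (g : Fin D → ℝ) :
    (1 + vecMulVec g g)⁻¹
      = 1 - (1/(1 + ∑ i, g i * g i)) • vecMulVec g g := by
  have hS : (0:ℝ) ≤ ∑ i, g i * g i := Finset.sum_nonneg fun i _ => mul_self_nonneg _
  set S := ∑ i, g i * g i with hSdef
  have hc : (1 + S) ≠ 0 := by positivity
  apply Matrix.inv_eq_right_inv
  have hMM : vecMulVec g g * vecMulVec g g = S • vecMulVec g g := by
    ext k l
    simp only [Matrix.mul_apply, vecMulVec_apply, Matrix.smul_apply, smul_eq_mul, hSdef]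
    rw [Finset.sum_mul]
    exact Finset.sum_congr rfl fun m _ => by ring
  rw [mul_sub, mul_one, mul_smul_comm, add_mul, one_mul, hMM, add_sub_assoc]
  rw [smul_add, smul_smul]
  have h1 : (1 : Matrix (Fin D) (Fin D) ℝ)
        + (vecMulVec g g - ((1/(1+S)) • vecMulVec g g + ((1/(1+S)) * S) • vecMulVec g g))
      = 1 + (1 - (1/(1+S)) - (1/(1+S))*S) • vecMulVec g g := by
    rw [sub_smul, sub_smul, one_smul]
    abel
  rw [h1]
  have h0 : (1 - (1/(1+S)) - (1/(1+S))*S) = 0 := by field_simp; ring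
  rw [h0, zero_smul, add_zero]

/-- For a geodesic of the Monge metric `G(θ) = I + ∇ℓ(θ)∇ℓ(θ)ᵀ` starting at a point where
`∇ℓ = 0` (the MAP), the conservation law
`‖θ'(t)‖² + ⟪θ'(t), ∇ℓ(θ(t))⟫² = ‖θ'(0)‖²` holds, so `‖θ'(t)‖ ≤ ‖θ'(0)‖`, with strict
inequality whenever `⟪θ'(t), ∇ℓ(θ(t))⟫ ≠ 0`. -/
theorem monge_geodesic_velocity_bound
    (D : ℕ) (hD : 1 ≤ D)
    (ℓ : EuclideanSpace ℝ (Fin D) → ℝ)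
    (hℓ : ContDiff ℝ 2 ℓ)
    (G : EuclideanSpace ℝ (Fin D) → Matrix (Fin D) (Fin D) ℝ)
    (hG : ∀ x : EuclideanSpace ℝ (Fin D),
      G x = 1 + Matrix.vecMulVec (fun i => gradient ℓ x i) (fun i => gradient ℓ x i))
    (θ : ℝ → EuclideanSpace ℝ (Fin D))
    (hθ : ContDiff ℝ 2 θ)
    (hgeo : ∀ (t : ℝ) (k : Fin D),
      deriv (deriv θ) t k
        = -∑ i : Fin D, ∑ j : Fin D,
            ((1 / 2 : ℝ) * ∑ l : Fin D, (G (θ t))⁻¹ k l *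
              (fderiv ℝ (fun x => G x j l) (θ t) (EuclideanSpace.single i 1)
                + fderiv ℝ (fun x => G x i l) (θ t) (EuclideanSpace.single j 1)
                - fderiv ℝ (fun x => G x i j) (θ t) (EuclideanSpace.single l 1)))
              * (deriv θ t i * deriv θ t j))
    (hinit : gradient ℓ (θ 0) = 0) :
    ∀ t : ℝ,
      (‖deriv θ t‖ ^ 2 + (inner ℝ (deriv θ t) (gradient ℓ (θ t)) : ℝ) ^ 2
          = ‖deriv θ 0‖ ^ 2) ∧
        ‖deriv θ t‖ ≤ ‖deriv θ 0‖ ∧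
        ((inner ℝ (deriv θ t) (gradient ℓ (θ t)) : ℝ) ≠ 0 →
          ‖deriv θ t‖ < ‖deriv θ 0‖) := by
  classical
  -- smoothness of the gradient
  have hgc : ContDiff ℝ 1 (gradient ℓ) :=
    (InnerProductSpace.toDual ℝ (EuclideanSpace ℝ (Fin D))).symm.contDiff.comp
      (hℓ.fderiv_right (by norm_num))
  have hgd : Differentiable ℝ (gradient ℓ) := hgc.differentiable one_ne_zero
  set H : EuclideanSpace ℝ (Fin D) → EuclideanSpace ℝ (Fin D) →L[ℝ] EuclideanSpace ℝ (Fin D) :=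
    fderiv ℝ (gradient ℓ) with hHdef
  have hH : ∀ x, HasFDerivAt (gradient ℓ) (H x) x := fun x => (hgd x).hasFDerivAt
  -- component formula for the Hessian and its symmetry
  have hHapp : ∀ (x w : EuclideanSpace ℝ (Fin D)) (j : Fin D),
      H x w j = fderiv ℝ (fderiv ℝ ℓ) x w (EuclideanSpace.single j 1) := by
    intro x w j
    have hfc : ContDiff ℝ 1 (fderiv ℝ ℓ) := hℓ.fderiv_right (by norm_num)
    have h1 := (EuclideanSpace.proj (𝕜 := ℝ) j).hasFDerivAt.comp x (hH x)
    have h2 := (ContinuousLinearMap.apply ℝ ℝ (EuclideanSpace.single j 1 :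
        EuclideanSpace ℝ (Fin D))).hasFDerivAt.comp x
        ((hfc.differentiable one_ne_zero x).hasFDerivAt)
    have h1' : HasFDerivAt (fun y => gradient ℓ y j)
        ((EuclideanSpace.proj (𝕜 := ℝ) j).comp (H x)) x := h1
    have h2' : HasFDerivAt (fun y => fderiv ℝ ℓ y (EuclideanSpace.single j 1))
        ((ContinuousLinearMap.apply ℝ ℝ (EuclideanSpace.single j 1 :
            EuclideanSpace ℝ (Fin D))).comp (fderiv ℝ (fderiv ℝ ℓ) x)) x := h2
    have heq : (fun y => gradient ℓ y j)
        = fun y => fderiv ℝ ℓ y (EuclideanSpace.single j 1) := by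
      funext y
      have := InnerProductSpace.toDual_symm_apply (𝕜 := ℝ) (E := EuclideanSpace ℝ (Fin D))
        (y := fderiv ℝ ℓ y) (x := EuclideanSpace.single j 1)
      rw [← this, gradient, EuclideanSpace.inner_single_right]
      simp
    rw [heq] at h1'
    exact congrFun (congrArg DFunLike.coe (h1'.unique h2')) w
  have hHsym : ∀ (x : EuclideanSpace ℝ (Fin D)) (i j : Fin D),
      H x (EuclideanSpace.single i 1) j = H x (EuclideanSpace.single j 1) i := by
    intro x i j
    rw [hHapp, hHapp]
    exact (hℓ.contDiffAt.isSymmSndFDerivAt (by norm_num)) _ _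
  -- derivative of the entries of G
  have hcomp : ∀ (x : EuclideanSpace ℝ (Fin D)) (j : Fin D),
      HasFDerivAt (fun y => gradient ℓ y j)
        ((EuclideanSpace.proj (𝕜 := ℝ) j).comp (H x)) x := by
    intro x j
    exact (EuclideanSpace.proj (𝕜 := ℝ) j).hasFDerivAt.comp x (hH x)
  have hGfd : ∀ (x : EuclideanSpace ℝ (Fin D)) (j l : Fin D)
      (w : EuclideanSpace ℝ (Fin D)),
      fderiv ℝ (fun y => G y j l) x w
        = gradient ℓ x j * H x w l + gradient ℓ x l * H x w j := by
    intro x j l w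
    have hmul : HasFDerivAt (fun y => gradient ℓ y j * gradient ℓ y l)
        (gradient ℓ x j • ((EuclideanSpace.proj (𝕜 := ℝ) l).comp (H x))
          + gradient ℓ x l • ((EuclideanSpace.proj (𝕜 := ℝ) j).comp (H x))) x :=
      (hcomp x j).mul (hcomp x l)
    have hfin : HasFDerivAt (fun y => G y j l)
        (gradient ℓ x j • ((EuclideanSpace.proj (𝕜 := ℝ) l).comp (H x))
          + gradient ℓ x l • ((EuclideanSpace.proj (𝕜 := ℝ) j).comp (H x))) x := by
      have heq : (fun y => G y j l)
          = fun y => (1 : Matrix (Fin D) (Fin D) ℝ) j l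
              + gradient ℓ y j * gradient ℓ y l := by
        funext y
        rw [hG y]
        simp [Matrix.add_apply, vecMulVec_apply]
      rw [heq]
      exact ((hasFDerivAt_const ((1 : Matrix (Fin D) (Fin D) ℝ) j l) x).add hmul).congr_fderiv (zero_add _)
    rw [hfin.fderiv]
    simp [ContinuousLinearMap.add_apply, ContinuousLinearMap.smul_apply]
  -- entries of the inverse of G
  have hGinv : ∀ (x : EuclideanSpace ℝ (Fin D)) (k l : Fin D),
      (G x)⁻¹ k l = (if k = l then (1:ℝ) else 0)
        - (1/(1 + ∑ i, gradient ℓ x i * gradient ℓ x i))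
            * (gradient ℓ x k * gradient ℓ x l) := by
    intro x k l
    rw [hG x, monge_inv_aux]
    simp [Matrix.sub_apply, Matrix.one_apply, Matrix.smul_apply, vecMulVec_apply, smul_eq_mul]
  -- regularity of the curve
  have hθd : Differentiable ℝ θ := hθ.differentiable (by norm_num)
  have hθ1 : ContDiff ℝ 1 (deriv θ) := by
    have h2 : ContDiff ℝ ((1 : ℕ) + 1) θ := by exact_mod_cast hθ
    exact (contDiff_succ_iff_deriv.mp h2).2.2
  have hv : ∀ t, HasDerivAt θ (deriv θ t) t := fun t => (hθd t).hasDerivAt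
  have hvd : ∀ t, HasDerivAt (deriv θ) (deriv (deriv θ) t) t :=
    fun t => ((hθ1.differentiable one_ne_zero) t).hasDerivAt
  -- the geodesic equation in simplified (vector) form
  have hacc : ∀ t, deriv (deriv θ) t
      = ((-(∑ i, ∑ j, H (θ t) (EuclideanSpace.single i 1) j * (deriv θ t i * deriv θ t j)))
          / (1 + ∑ i, gradient ℓ (θ t) i * gradient ℓ (θ t) i)) • gradient ℓ (θ t) := by
    intro t
    set x := θ t with hx
    set gt : EuclideanSpace ℝ (Fin D) := gradient ℓ x with hgt
    set S : ℝ := ∑ i, gt i * gt i with hSdef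
    have hS : (0:ℝ) ≤ S := Finset.sum_nonneg fun i _ => mul_self_nonneg _
    have hc : (1 + S) ≠ 0 := by positivity
    ext k
    rw [hgeo t k]
    have key : ∀ i j : Fin D,
        ((1 / 2 : ℝ) * ∑ l : Fin D, (G x)⁻¹ k l *
            (fderiv ℝ (fun y => G y j l) x (EuclideanSpace.single i 1)
              + fderiv ℝ (fun y => G y i l) x (EuclideanSpace.single j 1)
              - fderiv ℝ (fun y => G y i j) x (EuclideanSpace.single l 1)))
          = H x (EuclideanSpace.single i 1) j * (gt k / (1 + S)) := by
      intro i j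
      have hterm : ∀ l : Fin D, (G x)⁻¹ k l *
            (fderiv ℝ (fun y => G y j l) x (EuclideanSpace.single i 1)
              + fderiv ℝ (fun y => G y i l) x (EuclideanSpace.single j 1)
              - fderiv ℝ (fun y => G y i j) x (EuclideanSpace.single l 1))
          = (2 * H x (EuclideanSpace.single i 1) j) *
              (((if k = l then (1:ℝ) else 0) - (1/(1+S)) * (gt k * gt l)) * gt l) := by
        intro l
        rw [hGfd, hGfd, hGfd, hGinv]
        have e1 : H x (EuclideanSpace.single i 1) l = H x (EuclideanSpace.single l 1) i :=
          hHsym x i l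
        have e2 : H x (EuclideanSpace.single j 1) l = H x (EuclideanSpace.single l 1) j :=
          hHsym x j l
        have e3 : H x (EuclideanSpace.single j 1) i = H x (EuclideanSpace.single i 1) j :=
          hHsym x j i
        rw [e1, e2, e3]
        ring
      rw [Finset.sum_congr rfl (fun l _ => hterm l)]
      rw [← Finset.mul_sum]
      have hsum : ∑ l : Fin D,
          (((if k = l then (1:ℝ) else 0) - (1/(1+S)) * (gt k * gt l)) * gt l)
          = gt k - (1/(1+S)) * gt k * S := by
        have : ∀ l : Fin D,
            (((if k = l then (1:ℝ) else 0) - (1/(1+S)) * (gt k * gt l)) * gt l)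
            = (if k = l then gt l else 0) - (1/(1+S)) * gt k * (gt l * gt l) := by
          intro l; by_cases h : k = l <;> simp [h] <;> ring
        rw [Finset.sum_congr rfl (fun l _ => this l), Finset.sum_sub_distrib]
        rw [Finset.sum_ite_eq]
        simp [← Finset.mul_sum, hSdef]
      rw [hsum]
      field_simp
      ring
    rw [Finset.sum_congr rfl (fun i _ => Finset.sum_congr rfl (fun j _ => by rw [key i j]))]
    have pull : ∀ i : Fin D, ∑ j : Fin D,
        H x (EuclideanSpace.single i 1) j * (gt k / (1 + S)) * (deriv θ t i * deriv θ t j)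
        = (gt k / (1 + S)) *
            ∑ j : Fin D, H x (EuclideanSpace.single i 1) j * (deriv θ t i * deriv θ t j) := by
      intro i
      rw [Finset.mul_sum]
      exact Finset.sum_congr rfl fun j _ => by ring
    rw [Finset.sum_congr rfl (fun i _ => pull i), ← Finset.mul_sum]
    have : (((-(∑ i, ∑ j, H x (EuclideanSpace.single i 1) j * (deriv θ t i * deriv θ t j)))
          / (1 + S)) • gt) k
        = ((-(∑ i, ∑ j, H x (EuclideanSpace.single i 1) j
              * (deriv θ t i * deriv θ t j))) / (1 + S)) * gt k := rfl
    rw [this]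
    ring
  -- conserved energy
  set F : ℝ → ℝ := fun t => ‖deriv θ t‖ ^ 2
      + (inner ℝ (deriv θ t) (gradient ℓ (θ t)) : ℝ) ^ 2 with hFdef
  have hFalt : F = fun u => (inner ℝ (deriv θ u) (deriv θ u) : ℝ)
      + (inner ℝ (deriv θ u) (gradient ℓ (θ u)) : ℝ) ^ 2 := by
    funext u
    rw [hFdef, real_inner_self_eq_norm_sq]
  have hF0 : ∀ t, HasDerivAt F 0 t := by
    intro t
    set x := θ t with hx
    set v : EuclideanSpace ℝ (Fin D) := deriv θ t with hvdef
    set A : EuclideanSpace ℝ (Fin D) := deriv (deriv θ) t with hAdef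
    set w : EuclideanSpace ℝ (Fin D) := gradient ℓ x with hwdef
    set Q : ℝ := ∑ i, ∑ j, H x (EuclideanSpace.single i 1) j * (v i * v j) with hQdef
    set S : ℝ := ∑ i, w i * w i with hSdef
    have hS : (0:ℝ) ≤ S := Finset.sum_nonneg fun i _ => mul_self_nonneg _
    have hc : (1 + S) ≠ 0 := by positivity
    have hw : HasDerivAt (fun u => gradient ℓ (θ u)) (H x v) t :=
      (hH x).comp_hasDerivAt t (hv t)
    have h1 : HasDerivAt (fun u => (inner ℝ (deriv θ u) (deriv θ u) : ℝ))
        ((inner ℝ v A : ℝ) + (inner ℝ A v : ℝ)) t := (hvd t).inner ℝ (hvd t)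
    have h2 : HasDerivAt (fun u => (inner ℝ (deriv θ u) (gradient ℓ (θ u)) : ℝ))
        ((inner ℝ v (H x v) : ℝ) + (inner ℝ A w : ℝ)) t := (hvd t).inner ℝ hw
    have h3 := h1.add (h2.pow 2)
    rw [hFalt]
    have hww : (inner ℝ w w : ℝ) = S := by
      rw [hSdef, PiLp.inner_apply]
      simp [RCLike.inner_apply]
      exact Finset.sum_congr rfl fun i _ => sq _
    have hQ : (inner ℝ v (H x v) : ℝ) = Q := by
      have hvdec : (v : EuclideanSpace ℝ (Fin D))
          = ∑ i, v i • (EuclideanSpace.single i 1 : EuclideanSpace ℝ (Fin D)) := by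
        ext m
        have h2 : (∑ x : Fin D, v x • EuclideanSpace.single x 1 : EuclideanSpace ℝ (Fin D)) m
            = ∑ x : Fin D, (v x • (EuclideanSpace.single x 1 : EuclideanSpace ℝ (Fin D))) m :=
          map_sum (EuclideanSpace.proj (𝕜 := ℝ) m)
            (fun x => v x • (EuclideanSpace.single x 1 : EuclideanSpace ℝ (Fin D))) Finset.univ
        rw [h2]
        simp [PiLp.smul_apply, EuclideanSpace.single_apply, mul_ite]
      have hHv : ∀ j, H x v j = ∑ i, v i * H x (EuclideanSpace.single i 1) j := by
        intro j
        have hdec : H x v = ∑ i, v i • H x (EuclideanSpace.single i 1) := by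
          calc H x v = H x (∑ i, v i • EuclideanSpace.single i 1) := by rw [← hvdec]
            _ = ∑ i, H x (v i • EuclideanSpace.single i 1) := map_sum (H x) _ Finset.univ
            _ = ∑ i, v i • H x (EuclideanSpace.single i 1) :=
                Finset.sum_congr rfl fun i _ => (H x).map_smul _ _
        rw [hdec]
        have h2 : (∑ i, v i • H x (EuclideanSpace.single i 1) : EuclideanSpace ℝ (Fin D)) j
            = ∑ i, (v i • H x (EuclideanSpace.single i 1)) j :=
          map_sum (EuclideanSpace.proj (𝕜 := ℝ) j)
            (fun i => v i • H x (EuclideanSpace.single i 1)) Finset.univ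
        rw [h2]
        exact Finset.sum_congr rfl fun i _ => by simp [PiLp.smul_apply]
      rw [PiLp.inner_apply]
      simp only [RCLike.inner_apply, conj_trivial]
      calc ∑ m, (H x v) m * v m
          = ∑ m, ∑ i, H x (EuclideanSpace.single i 1) m * (v i * v m) := by
            refine Finset.sum_congr rfl fun m _ => ?_
            rw [hHv m, Finset.sum_mul]
            exact Finset.sum_congr rfl fun i _ => by ring
        _ = Q := by rw [hQdef]; exact Finset.sum_comm
    have hA : A = ((-Q) / (1 + S)) • w := by
      rw [hAdef]
      exact hacc t
    have htotal : (inner ℝ v A : ℝ) + (inner ℝ A v : ℝ)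
        + ↑(2:ℕ) * (inner ℝ (deriv θ t) (gradient ℓ (θ t)) : ℝ) ^ (2-1)
          * ((inner ℝ v (H x v) : ℝ) + (inner ℝ A w : ℝ)) = 0 := by
      have hsw : (inner ℝ (deriv θ t) (gradient ℓ (θ t)) : ℝ) = (inner ℝ v w : ℝ) := rfl
      rw [hsw, hA, real_inner_smul_right, real_inner_smul_left, real_inner_smul_left,
        real_inner_comm w v, hww, hQ]
      clear_value Q S v w x A
      have hc' : (1 + S) ≠ 0 := hc
      field_simp
      ring
    rw [← htotal]
    exact h3
  have hFdiff : Differentiable ℝ F := fun t => (hF0 t).differentiableAt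
  have hFconst : ∀ t, F t = F 0 :=
    fun t => is_const_of_deriv_eq_zero hFdiff (fun u => (hF0 u).deriv) t 0
  intro t
  have e : ‖deriv θ t‖ ^ 2 + (inner ℝ (deriv θ t) (gradient ℓ (θ t)) : ℝ) ^ 2
      = ‖deriv θ 0‖ ^ 2 := by
    have := hFconst t
    rw [hFdef] at this
    simp only at this
    rw [hinit, inner_zero_right] at this
    norm_num at this
    simpa using this
  refine ⟨e, ?_, ?_⟩
  · refine le_of_pow_le_pow_left₀ two_ne_zero (norm_nonneg _) ?_
    have h2 := sq_nonneg ((inner ℝ (deriv θ t) (gradient ℓ (θ t)) : ℝ))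
    linarith
  · intro hs
    refine lt_of_pow_lt_pow_left₀ 2 (norm_nonneg _) ?_
    have h2 : (0:ℝ) < (inner ℝ (deriv θ t) (gradient ℓ (θ t)) : ℝ) ^ 2 :=
      lt_of_le_of_ne (sq_nonneg _) (Ne.symm (pow_ne_zero 2 hs))
    linarith
end
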